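/- For every positive integer n, the function f(x) = n·x / ((1 − x)^{−n} − 1) is convex on the open interval (0, 1); that is, for all x, y ∈ (0,1) and t ∈ [0,1], f(t·x + (1−t)·y) ≤ t·f(x) + (1−t)·f(y). -/

import Mathlib

open Finset

/-- Geometric identity: `(1-y) * ∑_{k<m} y^(k+1) = y - y^(m+1)`. -/
private lemma geo_aux (m : ℕ) (y : ℝ) :
    (1 - y) * ∑ k ∈ range m, y ^ (k + 1) = y - y ^ (m + 1) := by
  have h := geom_sum_mul y m
  have hS : (∑ k ∈ range m, y ^ (k + 1)) = y * ∑ k ∈ range m, y ^ k := by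
    rw [Finset.mul_sum]
    exact Finset.sum_congr rfl fun k _ => by ring
  rw [hS]
  linear_combination (-y) * h

/-- Key positivity: `R(y) = m - (m+2)y + (m+2)y^(m+1) - m y^(m+2) ≥ 0` on `[0,1]`. -/
private lemma R_nonneg (m : ℕ) {y : ℝ} (h0 : 0 ≤ y) (h1 : y ≤ 1) :
    0 ≤ (m : ℝ) - ((m : ℝ) + 2) * y + ((m : ℝ) + 2) * y ^ (m + 1)
        - (m : ℝ) * y ^ (m + 2) := by
  set S : ℝ := ∑ k ∈ range m, y ^ (k + 1) with hSdef
  have hsum : 2 * S ≤ (m : ℝ) * (1 + y ^ (m + 1)) := by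
    have hrefl : (∑ k ∈ range m, y ^ (m - k)) = S := by
      rw [hSdef, ← Finset.sum_range_reflect (fun k => y ^ (k + 1)) m]
      exact Finset.sum_congr rfl fun k hk => by
        have := Finset.mem_range.1 hk
        congr 1
        omega
    have h2S : 2 * S = ∑ k ∈ range m, (y ^ (k + 1) + y ^ (m - k)) := by
      rw [Finset.sum_add_distrib, hrefl, hSdef]; ring
    rw [h2S]
    calc (∑ k ∈ range m, (y ^ (k + 1) + y ^ (m - k)))
        ≤ ∑ _k ∈ range m, (1 + y ^ (m + 1)) := by
          apply Finset.sum_le_sum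
          intro k hk
          have hk' := Finset.mem_range.1 hk
          have e : y ^ (k + 1) * y ^ (m - k) = y ^ (m + 1) := by
            rw [← pow_add]; congr 1; omega
          have a1 : y ^ (k + 1) ≤ 1 := pow_le_one₀ h0 h1
          have a2 : y ^ (m - k) ≤ 1 := pow_le_one₀ h0 h1
          nlinarith [mul_nonneg (sub_nonneg.2 a1) (sub_nonneg.2 a2)]
      _ = (m : ℝ) * (1 + y ^ (m + 1)) := by
          rw [Finset.sum_const, Finset.card_range, nsmul_eq_mul]
  have geo := geo_aux m y
  have hfin : (m : ℝ) - ((m : ℝ) + 2) * y + ((m : ℝ) + 2) * y ^ (m + 1)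
      - (m : ℝ) * y ^ (m + 2)
      = (1 - y) * ((m : ℝ) * (1 + y ^ (m + 1)) - 2 * S) := by
    linear_combination 2 * geo
  rw [hfin]
  exact mul_nonneg (by linarith) (by linarith)

/-- The function of Lemma 2, written with natural powers. -/
noncomputable def Faux (m : ℕ) : ℝ → ℝ :=
  fun x => ((m : ℝ) + 1) * x / (((1 - x) ^ (m + 1))⁻¹ - 1)

/-- Its first derivative. -/
noncomputable def F1aux (m : ℕ) : ℝ → ℝ :=
  fun x => (((m : ℝ) + 1) * (((1 - x) ^ (m + 1))⁻¹ - 1)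
      - ((m : ℝ) + 1) * x * (((m : ℝ) + 1) * ((1 - x) ^ (m + 2))⁻¹))
    / (((1 - x) ^ (m + 1))⁻¹ - 1) ^ 2

/-- Its second derivative. -/
noncomputable def F2aux (m : ℕ) : ℝ → ℝ :=
  fun x =>
    ((((m : ℝ) + 1) * (((m : ℝ) + 1) * ((1 - x) ^ (m + 2))⁻¹)
        - (((m : ℝ) + 1) * (((m : ℝ) + 1) * ((1 - x) ^ (m + 2))⁻¹)
          + ((m : ℝ) + 1) * x * (((m : ℝ) + 1) * (((m : ℝ) + 2) * ((1 - x) ^ (m + 3))⁻¹))))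
        * ((((1 - x) ^ (m + 1))⁻¹ - 1) ^ 2)
      - (((m : ℝ) + 1) * (((1 - x) ^ (m + 1))⁻¹ - 1)
          - ((m : ℝ) + 1) * x * (((m : ℝ) + 1) * ((1 - x) ^ (m + 2))⁻¹))
        * (2 * ((((1 - x) ^ (m + 1))⁻¹ - 1)) ^ (2 - 1)
            * (((m : ℝ) + 1) * ((1 - x) ^ (m + 2))⁻¹)))
    / ((((1 - x) ^ (m + 1))⁻¹ - 1) ^ 2) ^ 2

private lemma hasDerivAt_inv_pow (k : ℕ) {x : ℝ} (hx : 1 - x ≠ 0) :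
    HasDerivAt (fun x : ℝ => ((1 - x) ^ (k + 1))⁻¹)
      (((k : ℝ) + 1) * ((1 - x) ^ (k + 2))⁻¹) x := by
  have hb : HasDerivAt (fun x : ℝ => 1 - x) (-1) x := by
    simpa using (hasDerivAt_id x).const_sub 1
  have hp := hb.pow (k + 1)
  have hi := hp.inv (pow_ne_zero _ hx)
  refine hi.congr_deriv ?_
  simp only [Nat.add_sub_cancel, Pi.pow_apply, Nat.cast_add, Nat.cast_one]
  field_simp
  ring

private lemma hasDerivAt_F (m : ℕ) {x : ℝ} (hx : 1 - x ≠ 0)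
    (hV : ((1 - x) ^ (m + 1))⁻¹ - 1 ≠ 0) :
    HasDerivAt (Faux m) (F1aux m x) x := by
  have hu : HasDerivAt (fun x : ℝ => ((m : ℝ) + 1) * x) ((m : ℝ) + 1) x := by
    simpa using (hasDerivAt_id x).const_mul ((m : ℝ) + 1)
  have hVd : HasDerivAt (fun x : ℝ => ((1 - x) ^ (m + 1))⁻¹ - 1)
      (((m : ℝ) + 1) * ((1 - x) ^ (m + 2))⁻¹) x :=
    (hasDerivAt_inv_pow m hx).sub_const 1
  have := hu.div hVd hV
  exact this

private lemma hasDerivAt_F1 (m : ℕ) {x : ℝ} (hx : 1 - x ≠ 0)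
    (hV : ((1 - x) ^ (m + 1))⁻¹ - 1 ≠ 0) :
    HasDerivAt (F1aux m) (F2aux m x) x := by
  have hVd : HasDerivAt (fun x : ℝ => ((1 - x) ^ (m + 1))⁻¹ - 1)
      (((m : ℝ) + 1) * ((1 - x) ^ (m + 2))⁻¹) x :=
    (hasDerivAt_inv_pow m hx).sub_const 1
  have hN : HasDerivAt
      (fun x : ℝ => ((m : ℝ) + 1) * (((1 - x) ^ (m + 1))⁻¹ - 1)
        - ((m : ℝ) + 1) * x * (((m : ℝ) + 1) * ((1 - x) ^ (m + 2))⁻¹))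
      (((m : ℝ) + 1) * (((m : ℝ) + 1) * ((1 - x) ^ (m + 2))⁻¹)
        - ((((m : ℝ) + 1) * (((m : ℝ) + 1) * ((1 - x) ^ (m + 2))⁻¹))
          + ((m : ℝ) + 1) * x * (((m : ℝ) + 1) * (((m : ℝ) + 2) * ((1 - x) ^ (m + 3))⁻¹)))) x := by
    have h1 := hVd.const_mul ((m : ℝ) + 1)
    have hu : HasDerivAt (fun x : ℝ => ((m : ℝ) + 1) * x) ((m : ℝ) + 1) x := by
      simpa using (hasDerivAt_id x).const_mul ((m : ℝ) + 1)
    have h2inner := (hasDerivAt_inv_pow (m + 1) hx).const_mul ((m : ℝ) + 1)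
    have h2 := hu.mul h2inner
    have := h1.sub h2
    refine this.congr_deriv ?_
    push_cast
    ring
  have hB : HasDerivAt (fun x : ℝ => ((((1 - x) ^ (m + 1))⁻¹ - 1)) ^ 2)
      (2 * ((((1 - x) ^ (m + 1))⁻¹ - 1)) ^ (2 - 1)
        * (((m : ℝ) + 1) * ((1 - x) ^ (m + 2))⁻¹)) x := by
    exact hVd.pow 2
  have := hN.div hB (pow_ne_zero 2 hV)
  exact this

private lemma V_pos (m : ℕ) {x : ℝ} (hx0 : 0 < x) (hx1 : x < 1) :
    0 < ((1 - x) ^ (m + 1))⁻¹ - 1 := by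
  have hv0 : (0:ℝ) < 1 - x := by linarith
  have hp : (0:ℝ) < (1 - x) ^ (m + 1) := pow_pos hv0 _
  have hplt : (1 - x) ^ (m + 1) < 1 := pow_lt_one₀ (by linarith) (by linarith) (Nat.succ_ne_zero m)
  have hmul : (1 - x) ^ (m + 1) * ((1 - x) ^ (m + 1))⁻¹ = 1 := mul_inv_cancel₀ (ne_of_gt hp)
  nlinarith [mul_pos (inv_pos.2 hp) (show (0:ℝ) < 1 - (1 - x) ^ (m + 1) by linarith), hmul]

private lemma F2_nonneg (m : ℕ) {x : ℝ} (hx0 : 0 < x) (hx1 : x < 1) :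
    0 ≤ F2aux m x := by
  have hv0 : (0:ℝ) < 1 - x := by linarith
  have hvne : (1:ℝ) - x ≠ 0 := ne_of_gt hv0
  have hVpos := V_pos m hx0 hx1
  have hR := R_nonneg m (y := 1 - x) (by linarith) (by linarith)
  unfold F2aux
  apply div_nonneg _ (by positivity)
  have hid : (((m : ℝ) + 1) * (((m : ℝ) + 1) * ((1 - x) ^ (m + 2))⁻¹)
        - (((m : ℝ) + 1) * (((m : ℝ) + 1) * ((1 - x) ^ (m + 2))⁻¹)
          + ((m : ℝ) + 1) * x * (((m : ℝ) + 1) * (((m : ℝ) + 2) * ((1 - x) ^ (m + 3))⁻¹))))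
        * ((((1 - x) ^ (m + 1))⁻¹ - 1) ^ 2)
      - (((m : ℝ) + 1) * (((1 - x) ^ (m + 1))⁻¹ - 1)
          - ((m : ℝ) + 1) * x * (((m : ℝ) + 1) * ((1 - x) ^ (m + 2))⁻¹))
        * (2 * ((((1 - x) ^ (m + 1))⁻¹ - 1)) ^ (2 - 1)
            * (((m : ℝ) + 1) * ((1 - x) ^ (m + 2))⁻¹))
      = ((((1 - x) ^ (m + 1))⁻¹ - 1)) * (((m : ℝ) + 1) ^ 2
          * ((m : ℝ) - ((m : ℝ) + 2) * (1 - x) + ((m : ℝ) + 2) * (1 - x) ^ (m + 1)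
            - (m : ℝ) * (1 - x) ^ (m + 2)))
        * ((1 - x) ^ (2 * m + 4))⁻¹ := by
    have h21 : (2 - 1 : ℕ) = 1 := rfl
    rw [h21]
    field_simp
    ring
  rw [hid]
  have h1 : (0:ℝ) ≤ ((m : ℝ) + 1) ^ 2 := sq_nonneg _
  positivity

private lemma convexOn_aux (m : ℕ) :
    ConvexOn ℝ (Set.Ioo (0:ℝ) 1) (Faux m) := by
  have hint : interior (Set.Ioo (0:ℝ) 1) = Set.Ioo (0:ℝ) 1 := isOpen_Ioo.interior_eq
  have hne1 : ∀ z ∈ Set.Ioo (0:ℝ) 1, (1 - z ≠ 0) := fun z hz => by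
    have := hz.2; intro h; simp at hz; linarith [sub_eq_zero.1 h]
  have hne2 : ∀ z ∈ Set.Ioo (0:ℝ) 1, ((1 - z) ^ (m + 1))⁻¹ - 1 ≠ 0 := fun z hz =>
    ne_of_gt (V_pos m hz.1 hz.2)
  have hev : ∀ x ∈ Set.Ioo (0:ℝ) 1, deriv (Faux m) =ᶠ[nhds x] F1aux m := fun x hx =>
    Filter.eventually_of_mem (isOpen_Ioo.mem_nhds hx)
      (fun z hz => (hasDerivAt_F m (hne1 z hz) (hne2 z hz)).deriv)
  apply convexOn_of_deriv2_nonneg (convex_Ioo 0 1)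
  · intro x hx
    exact (hasDerivAt_F m (hne1 x hx) (hne2 x hx)).continuousAt.continuousWithinAt
  · rw [hint]
    intro x hx
    exact (hasDerivAt_F m (hne1 x hx) (hne2 x hx)).differentiableAt.differentiableWithinAt
  · rw [hint]
    intro x hx
    exact ((hasDerivAt_F1 m (hne1 x hx) (hne2 x hx)).differentiableAt.congr_of_eventuallyEq
      (hev x hx)).differentiableWithinAt
  · rw [hint]
    intro x hx
    have e1 : deriv (deriv (Faux m)) x = deriv (F1aux m) x := (hev x hx).deriv_eq
    have e2 : deriv (F1aux m) x = F2aux m x :=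
      (hasDerivAt_F1 m (hne1 x hx) (hne2 x hx)).deriv
    show 0 ≤ deriv (deriv (Faux m)) x
    rw [e1, e2]
    exact F2_nonneg m hx.1 hx.2

/-- Lemma 2: for every positive integer `n`, the function
`f x = n * x / ((1 - x)^(-n) - 1)` is convex on `(0, 1)`. -/
theorem convex_nx_div_inv_pow (n : ℕ) (hn : 0 < n) :
    ∀ x ∈ Set.Ioo (0 : ℝ) 1, ∀ y ∈ Set.Ioo (0 : ℝ) 1,
      ∀ t ∈ Set.Icc (0 : ℝ) 1,
        (n : ℝ) * (t * x + (1 - t) * y) /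
            ((1 - (t * x + (1 - t) * y)) ^ (-(n : ℤ)) - 1) ≤
          t * ((n : ℝ) * x / ((1 - x) ^ (-(n : ℤ)) - 1)) +
            (1 - t) * ((n : ℝ) * y / ((1 - y) ^ (-(n : ℤ)) - 1)) := by
  obtain ⟨m, rfl⟩ : ∃ m, n = m + 1 := ⟨n - 1, by omega⟩
  intro x hx y hy t ht
  have hc := (convexOn_aux m).2 hx hy ht.1
    (show (0:ℝ) ≤ 1 - t by linarith [ht.2]) (by ring)
  simp only [smul_eq_mul, Faux] at hc
  simp only [zpow_neg, zpow_natCast]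
  push_cast
  convert hc using 2
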